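/- For every rational number q, the word γ_ℚ(q) is a Dyck word of finite length, and α_ℚ(γ_ℚ(q)) = q, where α_ℚ is the standard RPF rational evaluation; hence every rational number is represented by a finite Dyck word. -/

import Mathlib

/-!
`γ_ℚ` is well defined because `2 · |num q| · den q + [q < 0]` drops from `q` to `|q|` and from
`q > 0` to each exponent `aᵢ`, as `|aᵢ| < 2 ^ |aᵢ| ≤ pᵢ ^ |aᵢ| ≤ |num q| · den q`.
`α_ℚ` obeys its recursion for every admissible split `w = w' ++ z` because that split is unique:
a concatenation of chunks `"(" ++ d ++ ")"` of Dyck words `d` determines its chunks (the first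
`d` ends at the first return to balance), and the condition on `w'` makes the run `z` of
trailing `"()"` maximal. For `q > 0`, `γ_ℚ q` is its own `w'`: its last chunk wraps `γ_ℚ(aₘ)`
with `aₘ ≠ 0`, so it ends in `"))"` unless `q = 1`. Hence
`α_ℚ(γ_ℚ q) = ∏ pᵢ ^ α_ℚ(γ_ℚ aᵢ) = ∏ pᵢ ^ aᵢ = q` by induction, and for `q < 0` the extra
trailing `"()"` contributes the sign.
-/

/-- A Dyck word over {(,)}, encoded as `List Bool` with `true` = '(' and `false` = ')'. -/
def IsDyck (w : List Bool) : Prop :=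
  (∀ k, (w.take k).count false ≤ (w.take k).count true) ∧
    w.count true = w.count false

/-- The exponent of the `i`-th prime (0-indexed) in the rational prime factorization
of `q`. -/
noncomputable def qExp (q : ℚ) (i : ℕ) : ℤ :=
  (q.num.natAbs.factorization (Nat.nth Nat.Prime i) : ℤ)
    - (q.den.factorization (Nat.nth Nat.Prime i) : ℤ)

/-- The defining recursion for the standard RPF rational spelling function:
`γ_ℚ 0 = ε`, `γ_ℚ 1 = "()"`, `γ_ℚ q = γ_ℚ |q| ++ "()"` for `q < 0`, and for positive
`q ≠ 1`, `γ_ℚ q = ⊕_{i<m} ("(" ++ γ_ℚ aᵢ ++ ")")` where `aᵢ = qExp q i` and the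
`(m-1)`-st prime is the greatest prime base of `q` (the largest prime dividing
numerator or denominator). -/
def GammaQSpec (g : ℚ → List Bool) : Prop :=
  g 0 = [] ∧ g 1 = [true, false] ∧
  (∀ q : ℚ, q < 0 → g q = g |q| ++ [true, false]) ∧
  (∀ q : ℚ, 0 < q → q ≠ 1 →
    g q = ((List.range (Nat.count Nat.Prime
          ((q.num.natAbs * q.den).factorization.support.sup id) + 1)).map
      (fun i => (true :: g ((qExp q i : ℤ) : ℚ)) ++ [false])).flatten)

/-- The defining recursion for the standard RPF rational evaluation `α_ℚ`:
`α_ℚ ε = 0`, and writing `w = w' ++ z` with `z` the longest suffix of empty pairs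
"()" such that `w' ≠ ε` (so either `w' = "()"` or `w'` does not end in "()"),
`α_ℚ w = (-1)^(dim z) ∏_{i < dim w'} pᵢ ^ α_ℚ(dᵢ)` where `(dᵢ)` are the chunks of
`w'`.  (Values are taken in `ℝ` so that the prime-power exponentiation by the
recursively obtained values makes sense; `^` is real exponentiation.) -/
def AlphaQSpec (a : List Bool → ℝ) : Prop :=
  a [] = 0 ∧
  ∀ (w' : List Bool) (k : ℕ) (l : List (List Bool)),
    w' ≠ [] → (w' = [true, false] ∨ ¬ ([true, false] <:+ w')) →
    (∀ d ∈ l, IsDyck d) →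
    w' = (l.map (fun d => (true :: d) ++ [false])).flatten →
    a (w' ++ (List.replicate k ([true, false])).flatten) =
      (-1 : ℝ) ^ k * ∏ i ∈ Finset.range l.length,
        ((Nat.nth Nat.Prime i : ℝ)) ^ (a (l.getD i []))

namespace RPF

def nest (d : List Bool) : List Bool := (true :: d) ++ [false]

def nestJoin (l : List (List Bool)) : List Bool := (l.map nest).flatten

def pairs (k : ℕ) : List Bool := (List.replicate k [true, false]).flatten

@[simp] lemma nestJoin_nil : nestJoin [] = [] := rfl

@[simp] lemma nestJoin_cons (d : List Bool) (l : List (List Bool)) :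
    nestJoin (d :: l) = nest d ++ nestJoin l := rfl

lemma nestJoin_append (l l' : List (List Bool)) :
    nestJoin (l ++ l') = nestJoin l ++ nestJoin l' := by
  simp [nestJoin]

lemma two_le_length_nestJoin {l : List (List Bool)} (hl : l ≠ []) :
    2 ≤ (nestJoin l).length := by
  obtain ⟨d, l, rfl⟩ := List.exists_cons_of_ne_nil hl
  have : (nest d).length = d.length + 2 := by simp [nest]
  rw [nestJoin_cons, List.length_append]
  omega

lemma pairs_add (a b : ℕ) : pairs (a + b) = pairs a ++ pairs b := by
  rw [pairs, pairs, pairs, List.replicate_add, List.flatten_append]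

end RPF

open RPF

namespace IsDyck

lemma nil : IsDyck [] := ⟨by simp, rfl⟩

lemma count_le_of_prefix {w p : List Bool} (h : IsDyck w) (hp : p <+: w) :
    p.count false ≤ p.count true := by
  have := h.1 p.length
  rwa [← List.prefix_iff_eq_take.mp hp] at this

lemma append {u v : List Bool} (hu : IsDyck u) (hv : IsDyck v) : IsDyck (u ++ v) := by
  refine ⟨fun k => ?_, by simp [hu.2, hv.2]⟩
  have := hu.1 k
  have := hv.1 (k - u.length)
  simp only [List.take_append, List.count_append]
  omega

lemma nest {d : List Bool} (h : IsDyck d) : IsDyck (nest d) := by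
  refine ⟨fun k => ?_, by simp [RPF.nest, h.2]⟩
  cases k with
  | zero => simp
  | succ k =>
    have := h.1 k
    simp only [RPF.nest, List.cons_append, List.take_succ_cons, List.take_append,
      List.count_append, List.count_cons]
    grind

lemma nestJoin {l : List (List Bool)} (h : ∀ d ∈ l, IsDyck d) : IsDyck (nestJoin l) := by
  induction l with
  | nil => exact nil
  | cons d l ih => exact (h d (by simp)).nest.append (ih fun x hx => h x (by simp [hx]))

lemma exists_eq_append_false {w : List Bool} (h : IsDyck w) (hw : w ≠ []) :
    ∃ w₀, w = w₀ ++ [false] := by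
  obtain ⟨w₀, b, rfl⟩ := (List.eq_nil_or_concat' w).resolve_left hw
  cases b
  · exact ⟨w₀, rfl⟩
  · have hpre := h.count_le_of_prefix (List.prefix_append w₀ [true])
    have hbal := h.2
    simp only [List.count_append, List.count_singleton] at hbal
    grind

/-- A Dyck word `d` is the only Dyck prefix of `d ++ false :: r`: a longer Dyck word would have
the unbalanced prefix `d ++ [false]`. -/
lemma eq_of_append_false {d d' r r' : List Bool} (hd : IsDyck d) (hd' : IsDyck d')
    (h : d ++ false :: r = d' ++ false :: r') : d = d' := by
  wlog hle : d.length ≤ d'.length generalizing d d' r r'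
  · exact (this hd' hd h.symm (by omega)).symm
  rcases hle.lt_or_eq with hlt | heq
  · have hpre : d ++ [false] <+: d' :=
      List.prefix_of_prefix_length_le ⟨r, by simp [h]⟩ (List.prefix_append d' (false :: r'))
        (by simp; omega)
    have := hd'.count_le_of_prefix hpre
    simp [hd.2] at this
  · exact List.append_inj_left h heq

end IsDyck

namespace RPF

lemma nest_append_inj {d d' r r' : List Bool} (hd : IsDyck d) (hd' : IsDyck d')
    (h : nest d ++ r = nest d' ++ r') : d = d' ∧ r = r' := by
  simp only [nest, List.cons_append, List.append_assoc, List.cons.injEq, true_and] at h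
  obtain rfl := hd.eq_of_append_false hd' h
  simpa using h

lemma nestJoin_inj {l l' : List (List Bool)} (hl : ∀ d ∈ l, IsDyck d)
    (hl' : ∀ d ∈ l', IsDyck d) (h : nestJoin l = nestJoin l') : l = l' := by
  induction l generalizing l' with
  | nil => cases l' <;> simp_all [nest]
  | cons d l ih =>
    cases l' with
    | nil => simp [nest] at h
    | cons d' l' =>
      obtain ⟨rfl, htail⟩ := nest_append_inj (hl d (by simp)) (hl' d' (by simp)) h
      rw [ih (fun x hx => hl x (by simp [hx])) (fun x hx => hl' x (by simp [hx])) htail]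

lemma not_pair_suffix_nestJoin_concat {l : List (List Bool)} {d : List Bool} (hd : IsDyck d)
    (hne : d ≠ []) : ¬ [true, false] <:+ nestJoin (l ++ [d]) := by
  obtain ⟨d₀, rfl⟩ := hd.exists_eq_append_false hne
  intro hsuf
  have hff : [false, false] <:+ nestJoin (l ++ [d₀ ++ [false]]) :=
    ⟨nestJoin l ++ true :: d₀, by simp [nestJoin_append, nest]⟩
  simpa using (List.suffix_of_suffix_length_le hsuf hff le_rfl).eq_of_length rfl


/-- `w = w' ++ z` as in the definition of `α_ℚ`, with `w' = nestJoin l` and `z = pairs k`;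
the condition on `w'` makes `k` maximal. -/
structure IsSplit (w : List Bool) (k : ℕ) (l : List (List Bool)) : Prop where
  ne_nil : l ≠ []
  head : nestJoin l = [true, false] ∨ ¬ [true, false] <:+ nestJoin l
  isDyck : ∀ d ∈ l, IsDyck d
  eq : w = nestJoin l ++ pairs k

namespace IsSplit

variable {w : List Bool} {k k' : ℕ} {l l' : List (List Bool)}

lemma two_le_length (h : IsSplit w k l) : 2 ≤ w.length := by
  have := two_le_length_nestJoin h.ne_nil
  rw [h.eq, List.length_append]
  omega

lemma length_getD_lt (h : IsSplit w k l) (i : ℕ) : (l.getD i []).length < w.length := by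
  have hw := h.two_le_length
  by_cases hi : i < l.length
  · have := (List.sublist_flatten_of_mem (List.mem_map_of_mem (f := nest)
      (List.getElem_mem hi))).length_le
    rw [List.getD_eq_getElem _ _ hi, h.eq, List.length_append]
    simp only [nest, nestJoin, List.length_append, List.length_cons] at this ⊢
    omega
  · rw [List.getD_eq_default _ _ (by omega)]
    simp only [List.length_nil]
    omega

lemma append_pair (h : IsSplit w k l) : IsSplit (w ++ [true, false]) (k + 1) l :=
  ⟨h.ne_nil, h.head, h.isDyck, by rw [h.eq, pairs_add, List.append_assoc]; rfl⟩

lemma le_of_isSplit (h : IsSplit w k l) (h' : IsSplit w k' l') : k ≤ k' := by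
  by_contra! hlt
  obtain ⟨j, hj⟩ : ∃ j, k = k' + (j + 1) := ⟨k - k' - 1, by omega⟩
  have hl' : nestJoin l' = nestJoin l ++ pairs j ++ [true, false] := by
    apply List.append_cancel_right (bs := pairs k')
    rw [← h'.eq, h.eq, hj, add_comm, pairs_add, pairs_add]
    simp [pairs]
  have hsuf : [true, false] <:+ nestJoin l' := ⟨_, hl'.symm⟩
  have hlen := congrArg List.length (h'.head.resolve_right (not_not.mpr hsuf))
  have := two_le_length_nestJoin h.ne_nil
  rw [hl'] at hlen
  simp only [List.length_append, List.length_cons, List.length_nil] at hlen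
  omega

lemma unique (h : IsSplit w k l) (h' : IsSplit w k' l') : k = k' ∧ l = l' := by
  obtain rfl := (h.le_of_isSplit h').antisymm (h'.le_of_isSplit h)
  exact ⟨rfl, nestJoin_inj h.isDyck h'.isDyck
    (List.append_cancel_right (h.eq.symm.trans h'.eq))⟩

end IsSplit

open Classical in
/-- `α_ℚ`, read off a chosen split of `w`; splits are unique (`IsSplit.unique`). -/
noncomputable def alphaQ (w : List Bool) : ℝ :=
  if h : ∃ s : ℕ × List (List Bool), IsSplit w s.1 s.2 then
    (-1) ^ h.choose.1 * ∏ i ∈ Finset.range h.choose.2.length,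
      (Nat.nth Nat.Prime i : ℝ) ^ alphaQ (h.choose.2.getD i [])
  else 0
termination_by w.length
decreasing_by exact h.choose_spec.length_getD_lt i

lemma alphaQ_nil : alphaQ [] = 0 := by
  rw [alphaQ, dif_neg]
  rintro ⟨s, hs⟩
  simpa using hs.two_le_length

lemma IsSplit.alphaQ_eq {w : List Bool} {k : ℕ} {l : List (List Bool)} (h : IsSplit w k l) :
    alphaQ w = (-1) ^ k * ∏ i ∈ Finset.range l.length,
      (Nat.nth Nat.Prime i : ℝ) ^ alphaQ (l.getD i []) := by
  have hex : ∃ s : ℕ × List (List Bool), IsSplit w s.1 s.2 := ⟨(k, l), h⟩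
  obtain ⟨hk, hl⟩ := hex.choose_spec.unique h
  rw [alphaQ, dif_pos hex, hk, hl]

lemma alphaQ_append_pair {w : List Bool} {k : ℕ} {l : List (List Bool)} (h : IsSplit w k l) :
    alphaQ (w ++ [true, false]) = -alphaQ w := by
  rw [h.append_pair.alphaQ_eq, h.alphaQ_eq, pow_succ]
  ring

lemma alphaQSpec_alphaQ : AlphaQSpec alphaQ := by
  refine ⟨alphaQ_nil, fun w' k l hw' head hl hw'l => ?_⟩
  subst hw'l
  have hne : l ≠ [] := by rintro rfl; exact hw' rfl
  exact (IsSplit.mk hne head hl rfl).alphaQ_eq (w := _ ++ pairs k)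

end RPF

lemma Nat.prod_range_nth_prime_pow_factorization {n m : ℕ} (hn : n ≠ 0)
    (hm : ∀ p ∈ n.primeFactors, Nat.count Nat.Prime p < m) :
    ∏ i ∈ Finset.range m, Nat.nth Nat.Prime i ^ n.factorization (Nat.nth Nat.Prime i) = n := by
  have hsub : n.factorization.support ⊆ (Finset.range m).image (Nat.nth Nat.Prime) := by
    intro p hp
    rw [Nat.support_factorization] at hp
    exact Finset.mem_image.mpr ⟨_, Finset.mem_range.mpr (hm p hp),
      Nat.nth_count (Nat.prime_of_mem_primeFactors hp)⟩
  rw [← Finset.prod_image (f := fun p => p ^ n.factorization p)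
      fun i _ j _ hij => Nat.nth_injective Nat.infinite_setOfPred_prime hij,
    ← Finsupp.prod_of_support_subset _ hsub _ (fun _ _ => pow_zero _),
    Nat.prod_factorization_pow_eq_self hn]

namespace RPF

/-- The number `m` of chunks of `γ_ℚ q` for `q > 0`. -/
noncomputable def dimQ (q : ℚ) : ℕ :=
  Nat.count Nat.Prime ((q.num.natAbs * q.den).factorization.support.sup id) + 1

lemma count_lt_dimQ {q : ℚ} {p : ℕ} (hp : p ∈ (q.num.natAbs * q.den).primeFactors) :
    Nat.count Nat.Prime p < dimQ q := by
  have : p ≤ (q.num.natAbs * q.den).factorization.support.sup id :=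
    Finset.le_sup (f := id) (by rwa [Nat.support_factorization])
  exact Nat.lt_succ_of_le (Nat.count_monotone _ this)

lemma prod_nth_prime_zpow_qExp {q : ℚ} (hq : 0 < q) :
    ∏ i ∈ Finset.range (dimQ q), (Nat.nth Nat.Prime i : ℝ) ^ qExp q i = q := by
  have hnum : q.num.natAbs ≠ 0 := by simpa using hq.ne'
  have hprod (n : ℕ) (hn : n ≠ 0) (hdvd : n ∣ q.num.natAbs * q.den) :
      ∏ i ∈ Finset.range (dimQ q),
        (Nat.nth Nat.Prime i : ℝ) ^ (n.factorization (Nat.nth Nat.Prime i)) = n := by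
    exact_mod_cast Nat.prod_range_nth_prime_pow_factorization hn fun p hp =>
      count_lt_dimQ (Nat.primeFactors_mono hdvd (mul_ne_zero hnum q.den_nz) hp)
  have hp (i : ℕ) : (Nat.nth Nat.Prime i : ℝ) ≠ 0 := by
    exact_mod_cast (Nat.prime_nth_prime i).ne_zero
  simp only [qExp, zpow_sub₀ (hp _), zpow_natCast]
  rw [Finset.prod_div_distrib, hprod _ hnum (dvd_mul_right _ _),
    hprod _ q.den_nz (dvd_mul_left _ _), Nat.cast_natAbs, abs_of_pos (Rat.num_pos.mpr hq)]
  exact_mod_cast (Rat.num_div_den q)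

lemma qExp_dimQ_sub_one_ne_zero {q : ℚ} (hq : 0 < q) (h1 : q ≠ 1) : qExp q (dimQ q - 1) ≠ 0 := by
  have hnum : q.num.natAbs ≠ 0 := by simpa using hq.ne'
  have hN : 1 < q.num.natAbs * q.den := by
    refine lt_of_le_of_ne (Nat.one_le_iff_ne_zero.mpr (mul_ne_zero hnum q.den_nz)) fun hN => h1 ?_
    obtain ⟨hn, hd⟩ := mul_eq_one.mp hN.symm
    rw [← Rat.num_div_den q, hd, ← Int.natAbs_of_nonneg (Rat.num_nonneg.mpr hq.le), hn]
    norm_num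
  obtain ⟨S, hS, hSsup⟩ := Finset.exists_mem_eq_sup _
    (Nat.support_factorization _ ▸ Nat.nonempty_primeFactors.mpr hN) id
  have hSdim : dimQ q - 1 = Nat.count Nat.Prime S := by rw [dimQ, hSsup]; rfl
  rw [Nat.support_factorization] at hS
  rw [qExp, hSdim, Nat.nth_count (Nat.prime_of_mem_primeFactors hS)]
  have hmem (n : ℕ) : S ∈ n.primeFactors ↔ n.factorization S ≠ 0 := by
    rw [← Nat.support_factorization, Finsupp.mem_support_iff]
  have hdisj := Finset.disjoint_left.mp q.reduced.disjoint_primeFactors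
  rw [Nat.primeFactors_mul hnum q.den_nz, Finset.mem_union] at hS
  rcases hS with hS | hS
  · have := (hmem _).mp hS
    have := not_not.mp ((hmem _).not.mp (hdisj hS))
    omega
  · have := (hmem _).mp hS
    have := not_not.mp ((hmem _).not.mp fun h => hdisj h hS)
    omega

lemma natAbs_qExp_lt {q : ℚ} (hq : q ≠ 0) (i : ℕ) :
    (qExp q i).natAbs < q.num.natAbs * q.den := by
  have hnum : q.num.natAbs ≠ 0 := by simpa using hq
  have hN : q.num.natAbs * q.den ≠ 0 := mul_ne_zero hnum q.den_nz
  have hle : (qExp q i).natAbs ≤ (q.num.natAbs * q.den).factorization (Nat.nth Nat.Prime i) := by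
    rw [Nat.factorization_mul hnum q.den_nz, Finsupp.add_apply, qExp]
    omega
  calc (qExp q i).natAbs < 2 ^ (qExp q i).natAbs := Nat.lt_two_pow_self
    _ ≤ Nat.nth Nat.Prime i ^ (qExp q i).natAbs :=
      Nat.pow_le_pow_left (Nat.prime_nth_prime i).two_le _
    _ ≤ q.num.natAbs * q.den := Nat.le_of_dvd (Nat.pos_of_ne_zero hN)
      ((pow_dvd_pow _ hle).trans (Nat.ordProj_dvd _ _))

def gammaRank (q : ℚ) : ℕ := 2 * (q.num.natAbs * q.den) + if q < 0 then 1 else 0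

lemma gammaRank_abs_lt {q : ℚ} (hq : q < 0) : gammaRank |q| < gammaRank q := by
  simp [gammaRank, abs_of_neg hq, hq, (neg_pos.mpr hq).not_gt]

lemma gammaRank_qExp_lt {q : ℚ} (hq : 0 < q) (i : ℕ) : gammaRank (qExp q i) < gammaRank q := by
  have := natAbs_qExp_lt hq.ne' i
  simp only [gammaRank, Rat.num_intCast, Rat.den_intCast, hq.not_gt]
  split_ifs <;> omega

/-- The standard RPF rational spelling function `γ_ℚ`. The case `q = 1` needs no branch of its
own: there `m = 1` and `a₁ = 0`, so the positive branch gives `"(" ++ γ_ℚ 0 ++ ")" = "()"`. -/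
noncomputable def gammaQ (q : ℚ) : List Bool :=
  if q = 0 then []
  else if q < 0 then gammaQ |q| ++ [true, false]
  else nestJoin ((List.range (dimQ q)).map fun i => gammaQ (qExp q i))
termination_by gammaRank q
decreasing_by
  · exact gammaRank_abs_lt ‹q < 0›
  · exact gammaRank_qExp_lt (by order) i


noncomputable def gammaQChunks (q : ℚ) : List (List Bool) :=
  (List.range (dimQ q)).map fun i => gammaQ (qExp q i)

lemma gammaQ_zero : gammaQ 0 = [] := by
  rw [gammaQ, if_pos rfl]

lemma gammaQ_of_neg {q : ℚ} (hq : q < 0) : gammaQ q = gammaQ |q| ++ [true, false] := by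
  rw [gammaQ, if_neg hq.ne, if_pos hq]

lemma gammaQ_of_pos {q : ℚ} (hq : 0 < q) : gammaQ q = nestJoin (gammaQChunks q) := by
  rw [gammaQ, if_neg hq.ne', if_neg hq.not_gt, gammaQChunks]

lemma gammaQ_one : gammaQ 1 = [true, false] := by
  have hdim : dimQ 1 = 1 := by simp [dimQ]
  simp [gammaQ_of_pos, gammaQChunks, hdim, qExp, gammaQ_zero, nest]

lemma gammaQSpec_gammaQ : GammaQSpec gammaQ := by
  refine ⟨gammaQ_zero, gammaQ_one, fun q hq => gammaQ_of_neg hq, fun q hq _ => ?_⟩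
  rw [gammaQ_of_pos hq, gammaQChunks, nestJoin, List.map_map]
  rfl

lemma isDyck_gammaQ (q : ℚ) : IsDyck (gammaQ q) := by
  induction q using gammaQ.induct with
  | case1 => rw [gammaQ_zero]; exact .nil
  | case2 q _ hq ih => rw [gammaQ_of_neg hq]; exact ih.append IsDyck.nil.nest
  | case3 q h0 hneg ih =>
    rw [gammaQ_of_pos (by order)]
    refine .nestJoin fun d hd => ?_
    obtain ⟨i, -, rfl⟩ := List.mem_map.mp hd
    exact ih i

lemma length_gammaQChunks (q : ℚ) : (gammaQChunks q).length = dimQ q := by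
  simp [gammaQChunks]

lemma gammaQChunks_concat (q : ℚ) :
    gammaQChunks q = (List.range (dimQ q - 1)).map (fun i => gammaQ (qExp q i)) ++
      [gammaQ (qExp q (dimQ q - 1))] := by
  simp [gammaQChunks, dimQ, List.range_succ]

lemma gammaQ_ne_nil {q : ℚ} (hq : q ≠ 0) : gammaQ q ≠ [] := by
  rcases hq.lt_or_gt with hq | hq
  · simp [gammaQ_of_neg hq]
  · rw [gammaQ_of_pos hq, gammaQChunks_concat, nestJoin_append]
    simp [nest]

lemma isSplit_gammaQ {q : ℚ} (hq : 0 < q) : IsSplit (gammaQ q) 0 (gammaQChunks q) where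
  ne_nil := by simp [gammaQChunks_concat]
  head := by
    by_cases h1 : q = 1
    · left
      rw [← gammaQ_of_pos hq, h1, gammaQ_one]
    · right
      rw [gammaQChunks_concat]
      exact not_pair_suffix_nestJoin_concat (isDyck_gammaQ _)
        (gammaQ_ne_nil (by exact_mod_cast qExp_dimQ_sub_one_ne_zero hq h1))
  isDyck d hd := by
    obtain ⟨i, -, rfl⟩ := List.mem_map.mp hd
    exact isDyck_gammaQ _
  eq := by rw [gammaQ_of_pos hq]; exact (List.append_nil _).symm

lemma alphaQ_gammaQ (q : ℚ) : alphaQ (gammaQ q) = q := by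
  induction q using gammaQ.induct with
  | case1 => rw [gammaQ_zero, alphaQ_nil, Rat.cast_zero]
  | case2 q h0 hq ih =>
    rw [gammaQ_of_neg hq, alphaQ_append_pair (isSplit_gammaQ (abs_pos.mpr h0)), ih,
      abs_of_neg hq]
    push_cast
    ring
  | case3 q h0 hneg ih =>
    have hq : 0 < q := by order
    rw [(isSplit_gammaQ hq).alphaQ_eq, pow_zero, one_mul, length_gammaQChunks,
      ← prod_nth_prime_zpow_qExp hq]
    refine Finset.prod_congr rfl fun i hi => ?_
    rw [gammaQChunks, List.getD_eq_getElem _ _ (by simpa using hi), List.getElem_map,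
      List.getElem_range, ih, Rat.cast_intCast, Real.rpow_intCast]

end RPF

/-- For every rational `q`, the (finite) word `γ_ℚ q` is a Dyck word and
`α_ℚ (γ_ℚ q) = q`: every rational number is represented by a finite Dyck word. -/
theorem gammaQ_isDyck_and_alphaQ_gammaQ :
    ∃ (g : ℚ → List Bool) (a : List Bool → ℝ),
      GammaQSpec g ∧ AlphaQSpec a ∧
      ∀ q : ℚ, IsDyck (g q) ∧ a (g q) = (q : ℝ) :=
  ⟨gammaQ, alphaQ, gammaQSpec_gammaQ, alphaQSpec_alphaQ,
    fun q => ⟨isDyck_gammaQ q, alphaQ_gammaQ q⟩⟩
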